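/- arXiv:2407.03337 — 2 statements merged into one kernel-verified Lean document; each statement's English description precedes it below -/
import Mathlib

section
/- Under the same hypotheses as the AT convergence theorem, the AT iteration sequence {s_m} converges strongly to the fixed point s of R. -/
/-! Since `s` is a fixed point, the weak contraction inequality with `p = s` loses its `L`-term and
says that `R` maps `P ∩ closedBall s r` into `P ∩ closedBall s (ζ * r)`. These sets are convex, so
every convex combination in an AT step stays inside them; counting the applications of `R` along the
way, one AT step shrinks the radius by `ζ ^ 3`, and `s_ m` converges geometrically to `s`. -/

open Metric Set Filter Topology

theorem dist_apply_fixedPoint_le {E : Type*} [SeminormedAddCommGroup E] {P : Set E} {R : E → E}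
    {s : E} {ζ L : ℝ}
    (hweak : ∀ p q, p ∈ P → q ∈ P → ‖R p - R q‖ ≤ ζ * ‖p - q‖ + L * ‖p - R p‖)
    (hsP : s ∈ P) (hfix : R s = s) {p : E} (hp : p ∈ P) : dist (R p) s ≤ ζ * dist p s := by
  have h := hweak s p hsP hp
  rw [hfix, sub_self, norm_zero, mul_zero, add_zero] at h
  rwa [dist_eq_norm, dist_eq_norm, norm_sub_rev, norm_sub_rev p]

theorem mapsTo_inter_closedBall {X : Type*} [PseudoMetricSpace X] {P : Set X} {R : X → X} {s : X}
    {ζ : ℝ} (hmap : MapsTo R P P) (hcontr : ∀ p ∈ P, dist (R p) s ≤ ζ * dist p s)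
    (hζ : 0 ≤ ζ) (r : ℝ) : MapsTo R (P ∩ closedBall s r) (P ∩ closedBall s (ζ * r)) :=
  fun _ ⟨hp, hpr⟩ => ⟨hmap hp, (hcontr _ hp).trans (mul_le_mul_of_nonneg_left hpr hζ)⟩

theorem Convex.one_sub_smul_add_smul_apply_mem {E : Type*} [AddCommGroup E] [Module ℝ E]
    {K : Set E} {R : E → E} (hK : Convex ℝ K) (hmap : MapsTo R K K) {α : ℝ}
    (hα : α ∈ Icc (0 : ℝ) 1) {x : E} (hx : x ∈ K) : (1 - α) • x + α • R x ∈ K :=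
  hK hx (hmap hx) (by linarith [hα.2]) hα.1 (by ring)

section AT

variable {Q : Type*} [NormedAddCommGroup Q] [NormedSpace ℝ Q]

/-- The point `b_m` of the AT iteration. -/
noncomputable def atInner (R : Q → Q) (α : ℝ) (x : Q) : Q :=
  (1/2 : ℝ) • R (R x) + (1/2 : ℝ) • R (R ((1 - α) • x + α • R x))

/-- One step `s_m ↦ s_{m+1}` of the AT iteration with parameter `α = a_m`. -/
noncomputable def atStep (R : Q → Q) (α : ℝ) (x : Q) : Q :=
  R ((1 - α) • atInner R α x + α • R (atInner R α x))

variable {P : Set Q} {R : Q → Q} {s : Q} {ζ : ℝ}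

theorem atStep_mapsTo (hPconv : Convex ℝ P) (hmap : MapsTo R P P)
    (hcontr : ∀ p ∈ P, dist (R p) s ≤ ζ * dist p s) (hζ0 : 0 ≤ ζ) (hζ1 : ζ ≤ 1) {α : ℝ}
    (hα : α ∈ Icc (0 : ℝ) 1) {r : ℝ} (hr : 0 ≤ r) :
    MapsTo (atStep R α) (P ∩ closedBall s r) (P ∩ closedBall s (ζ ^ 3 * r)) := by
  have hR := mapsTo_inter_closedBall hmap hcontr hζ0
  have hconv (r : ℝ) : Convex ℝ (P ∩ closedBall s r) := hPconv.inter (convex_closedBall s r)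
  have hshrink {r : ℝ} (hr : 0 ≤ r) : P ∩ closedBall s (ζ * r) ⊆ P ∩ closedBall s r :=
    inter_subset_inter_right _ (closedBall_subset_closedBall (mul_le_of_le_one_left hr hζ1))
  have hR_self {r : ℝ} (hr : 0 ≤ r) : MapsTo R (P ∩ closedBall s r) (P ∩ closedBall s r) :=
    (hR r).mono_right (hshrink hr)
  have hr2 : 0 ≤ ζ * (ζ * r) := by positivity
  intro x hx
  have hb : atInner R α x ∈ P ∩ closedBall s (ζ * (ζ * r)) :=
    hconv _ (hR _ (hR _ hx))
      (hR _ (hR _ ((hconv r).one_sub_smul_add_smul_apply_mem (hR_self hr) hα hx)))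
      (by norm_num) (by norm_num) (by norm_num)
  have hu := (hconv _).one_sub_smul_add_smul_apply_mem (hR_self hr2) hα hb
  have h := hR _ hu
  rwa [show ζ * (ζ * (ζ * r)) = ζ ^ 3 * r by ring] at h

end AT

theorem AT_iteration_converges_general
    {Q : Type*} [NormedAddCommGroup Q] [NormedSpace ℝ Q]
    (P : Set Q) (hPconv : Convex ℝ P)
    (R : Q → Q) (hmap : Set.MapsTo R P P)
    (ζ L : ℝ) (hζ0 : 0 < ζ) (hζ1 : ζ < 1)
    (hweak : ∀ p q, p ∈ P → q ∈ P → ‖R p - R q‖ ≤ ζ * ‖p - q‖ + L * ‖p - R p‖)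
    (s : Q) (hsP : s ∈ P) (hfix : R s = s)
    (a : ℕ → ℝ) (ha : ∀ m, a m ∈ Set.Ioo (0 : ℝ) 1)
    (s_ b_ : ℕ → Q) (hs0 : s_ 0 ∈ P)
    (hb : ∀ m, b_ m = (1/2 : ℝ) • R (R (s_ m)) +
      (1/2 : ℝ) • R (R ((1 - a m) • s_ m + (a m) • R (s_ m))))
    (hs : ∀ m, s_ (m + 1) = R ((1 - a m) • b_ m + (a m) • R (b_ m))) :
    Filter.Tendsto s_ Filter.atTop (nhds s) := by
  have hcontr (p : Q) (hp : p ∈ P) := dist_apply_fixedPoint_le hweak hsP hfix hp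
  have hstep (m : ℕ) : s_ (m + 1) = atStep R (a m) (s_ m) := by rw [hs, hb]; rfl
  have hball (m : ℕ) : s_ m ∈ P ∩ closedBall s ((ζ ^ 3) ^ m * dist (s_ 0) s) := by
    induction m with
    | zero => simpa using hs0
    | succ m ih =>
      rw [hstep, pow_succ, mul_comm _ (ζ ^ 3), mul_assoc]
      exact atStep_mapsTo hPconv hmap hcontr hζ0.le hζ1.le (Ioo_subset_Icc_self (ha m))
        (by positivity) ih
  have hgeom : Tendsto (fun m => (ζ ^ 3) ^ m * dist (s_ 0) s) atTop (𝓝 0) := by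
    simpa using (tendsto_pow_atTop_nhds_zero_of_lt_one (by positivity)
      (pow_lt_one₀ hζ0.le hζ1 three_ne_zero)).mul_const (dist (s_ 0) s)
  exact tendsto_iff_dist_tendsto_zero.2
    (squeeze_zero (fun _ => dist_nonneg) (fun m => (hball m).2) hgeom)

theorem AT_iteration_converges
    {Q : Type*} [NormedAddCommGroup Q] [NormedSpace ℝ Q] [CompleteSpace Q]
    (P : Set Q) (hP : P.Nonempty) (hPc : IsClosed P) (hPconv : Convex ℝ P)
    (R : Q → Q) (hmap : Set.MapsTo R P P)
    (ζ L : ℝ) (hζ0 : 0 < ζ) (hζ1 : ζ < 1) (hL : 0 ≤ L)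
    (hweak : ∀ p q, p ∈ P → q ∈ P → ‖R p - R q‖ ≤ ζ * ‖p - q‖ + L * ‖p - R p‖)
    (s : Q) (hsP : s ∈ P) (hfix : R s = s)
    (a : ℕ → ℝ) (ha : ∀ m, a m ∈ Set.Ioo (0 : ℝ) 1)
    (s_ b_ : ℕ → Q) (hs0 : s_ 0 ∈ P)
    (hb : ∀ m, b_ m = (1/2 : ℝ) • R (R (s_ m)) +
      (1/2 : ℝ) • R (R ((1 - a m) • s_ m + (a m) • R (s_ m))))
    (hs : ∀ m, s_ (m + 1) = R ((1 - a m) • b_ m + (a m) • R (b_ m))) :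
    Filter.Tendsto s_ Filter.atTop (nhds s) :=
  AT_iteration_converges_general P hPconv R hmap ζ L hζ0 hζ1 hweak s hsP hfix a ha s_ b_ hs0 hb hs
end

section
/- For the F* iteration s_{m+1} = R(b_m), b_m = R((1−a_m)s_m + a_m R s_m) applied to a weak contraction R with fixed point s and constant ζ ∈ (0,1), one has ‖s_{m+1} − s‖ ≤ ζ²‖s_m − s‖ for all m, hence ‖s_m − s‖ ≤ ζ^{2m}‖s_0 − s‖. -/
/-!
Taking `p = s` in the weak-contraction inequality kills the `L`-term, since `R s = s`, so `R`
contracts every point of `P` towards `s` by the factor `ζ`. The averaged point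
`(1 - a) • x + a • R x` is then no farther from `s` than `x` (closed balls are convex), and the
two further applications of `R` contribute `ζ ^ 2`.
-/

section WeakContraction

variable {Q : Type*} [NormedAddCommGroup Q] {P : Set Q} {R : Q → Q} {ζ L : ℝ} {s : Q}

theorem norm_apply_sub_fixedPoint_le
    (hweak : ∀ p q, p ∈ P → q ∈ P → ‖R p - R q‖ ≤ ζ * ‖p - q‖ + L * ‖p - R p‖)
    (hsP : s ∈ P) (hfix : R s = s) {x : Q} (hx : x ∈ P) :
    ‖R x - s‖ ≤ ζ * ‖x - s‖ := by
  have h := hweak s x hsP hx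
  rwa [hfix, sub_self, norm_zero, mul_zero, add_zero, norm_sub_rev, norm_sub_rev s] at h

end WeakContraction

section FStar

variable {Q : Type*} [NormedAddCommGroup Q] [NormedSpace ℝ Q]

theorem norm_convexCombination_sub_le {x y s : Q} {a : ℝ} (ha0 : 0 ≤ a) (ha1 : a ≤ 1)
    (hy : ‖y - s‖ ≤ ‖x - s‖) : ‖(1 - a) • x + a • y - s‖ ≤ ‖x - s‖ := by
  have hmem := convex_closedBall s ‖x - s‖ (mem_closedBall_iff_norm.mpr le_rfl)
    (mem_closedBall_iff_norm.mpr hy) (sub_nonneg.mpr ha1) ha0 (sub_add_cancel 1 a)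
  exact mem_closedBall_iff_norm.mp hmem

def fStarStep (R : Q → Q) (a : ℝ) (x : Q) : Q :=
  R (R ((1 - a) • x + a • R x))

variable {P : Set Q} {R : Q → Q} {ζ L a : ℝ} {s x : Q}

theorem fStarStep_mem (hmap : Set.MapsTo R P P) (hconv : Convex ℝ P)
    (ha0 : 0 ≤ a) (ha1 : a ≤ 1) (hx : x ∈ P) : fStarStep R a x ∈ P :=
  hmap (hmap (hconv hx (hmap hx) (sub_nonneg.mpr ha1) ha0 (sub_add_cancel 1 a)))

theorem norm_fStarStep_sub_le (hmap : Set.MapsTo R P P) (hconv : Convex ℝ P)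
    (hweak : ∀ p q, p ∈ P → q ∈ P → ‖R p - R q‖ ≤ ζ * ‖p - q‖ + L * ‖p - R p‖)
    (hsP : s ∈ P) (hfix : R s = s) (hζ0 : 0 ≤ ζ) (hζ1 : ζ ≤ 1)
    (ha0 : 0 ≤ a) (ha1 : a ≤ 1) (hx : x ∈ P) :
    ‖fStarStep R a x - s‖ ≤ ζ ^ 2 * ‖x - s‖ := by
  set y := (1 - a) • x + a • R x
  have hy : y ∈ P := hconv hx (hmap hx) (sub_nonneg.mpr ha1) ha0 (sub_add_cancel 1 a)
  have hRx : ‖R x - s‖ ≤ ‖x - s‖ :=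
    (norm_apply_sub_fixedPoint_le hweak hsP hfix hx).trans
      (mul_le_of_le_one_left (norm_nonneg _) hζ1)
  calc ‖R (R y) - s‖
      ≤ ζ * ‖R y - s‖ := norm_apply_sub_fixedPoint_le hweak hsP hfix (hmap hy)
    _ ≤ ζ * (ζ * ‖y - s‖) :=
        mul_le_mul_of_nonneg_left (norm_apply_sub_fixedPoint_le hweak hsP hfix hy) hζ0
    _ ≤ ζ * (ζ * ‖x - s‖) := by
        gcongr
        exact norm_convexCombination_sub_le ha0 ha1 hRx
    _ = ζ ^ 2 * ‖x - s‖ := by ring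

end FStar

theorem Fstar_iteration_estimate_general
    {Q : Type*} [NormedAddCommGroup Q] [NormedSpace ℝ Q]
    (P : Set Q) (hPconv : Convex ℝ P)
    (R : Q → Q) (hmap : Set.MapsTo R P P)
    (ζ L : ℝ) (hζ0 : 0 < ζ) (hζ1 : ζ < 1)
    (hweak : ∀ p q, p ∈ P → q ∈ P → ‖R p - R q‖ ≤ ζ * ‖p - q‖ + L * ‖p - R p‖)
    (s : Q) (hsP : s ∈ P) (hfix : R s = s)
    (a : ℕ → ℝ) (ha : ∀ m, a m ∈ Set.Ioo (0 : ℝ) 1)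
    (s_ : ℕ → Q) (hs0 : s_ 0 ∈ P)
    (hs : ∀ m, s_ (m + 1) = R (R ((1 - a m) • s_ m + (a m) • R (s_ m)))) :
    (∀ m, ‖s_ (m + 1) - s‖ ≤ ζ ^ 2 * ‖s_ m - s‖) ∧
    (∀ m, ‖s_ m - s‖ ≤ ζ ^ (2 * m) * ‖s_ 0 - s‖) := by
  have ha0 m : 0 ≤ a m := (ha m).1.le
  have ha1 m : a m ≤ 1 := (ha m).2.le
  have hmem : ∀ m, s_ m ∈ P := by
    intro m
    induction m with
    | zero => exact hs0
    | succ m ih => rw [hs m]; exact fStarStep_mem hmap hPconv (ha0 m) (ha1 m) ih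
  have hstep m : ‖s_ (m + 1) - s‖ ≤ ζ ^ 2 * ‖s_ m - s‖ := by
    rw [hs m]
    exact norm_fStarStep_sub_le hmap hPconv hweak hsP hfix hζ0.le hζ1.le (ha0 m) (ha1 m) (hmem m)
  refine ⟨hstep, fun m => ?_⟩
  rw [pow_mul]
  exact le_geom (u := fun m => ‖s_ m - s‖) (by positivity) m fun k _ => hstep k

theorem Fstar_iteration_estimate
    {Q : Type*} [NormedAddCommGroup Q] [NormedSpace ℝ Q] [CompleteSpace Q]
    (P : Set Q) (hP : P.Nonempty) (hPc : IsClosed P) (hPconv : Convex ℝ P)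
    (R : Q → Q) (hmap : Set.MapsTo R P P)
    (ζ L : ℝ) (hζ0 : 0 < ζ) (hζ1 : ζ < 1) (hL : 0 ≤ L)
    (hweak : ∀ p q, p ∈ P → q ∈ P → ‖R p - R q‖ ≤ ζ * ‖p - q‖ + L * ‖p - R p‖)
    (s : Q) (hsP : s ∈ P) (hfix : R s = s)
    (a : ℕ → ℝ) (ha : ∀ m, a m ∈ Set.Ioo (0 : ℝ) 1)
    (s_ : ℕ → Q) (hs0 : s_ 0 ∈ P)
    (hs : ∀ m, s_ (m + 1) = R (R ((1 - a m) • s_ m + (a m) • R (s_ m)))) :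
    (∀ m, ‖s_ (m + 1) - s‖ ≤ ζ ^ 2 * ‖s_ m - s‖) ∧
    (∀ m, ‖s_ m - s‖ ≤ ζ ^ (2 * m) * ‖s_ 0 - s‖) :=
  Fstar_iteration_estimate_general P hPconv R hmap ζ L hζ0 hζ1 hweak s hsP hfix a ha s_ hs0 hs
end
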